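/- For arbitrary n the following three sets coincide: (Λ_r^{(0)} + 𝒢^n)^× Λ_r^× = (𝒢^0 + 𝒢^n)^× Λ_r^× = (Λ_r + 𝒢^n)^×. -/
import Mathlib


open Pointwise

noncomputable section

namespace ClGA

variable (𝔽 : Type*) [RCLike 𝔽] (p q r : ℕ)

/-- The diagonal weights: `p` ones, `q` minus-ones, `r` zeros. -/
def w : Fin (p + q + r) → 𝔽 := fun i =>
  if (i : ℕ) < p then 1 else if (i : ℕ) < p + q then -1 else 0

/-- The quadratic form on `𝔽^n` whose Gram matrix is `diag(1,…,1,−1,…,−1,0,…,0)`. -/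
def Q : QuadraticForm 𝔽 (Fin (p + q + r) → 𝔽) :=
  QuadraticMap.weightedSumSquares 𝔽 (w 𝔽 p q r)

/-- The degenerate Clifford geometric algebra `𝒢 = 𝒢_{p,q,r}`. -/
abbrev G := CliffordAlgebra (Q 𝔽 p q r)

/-- The generators `e_a`, `a = 1, …, n`. -/
def e (a : Fin (p + q + r)) : G 𝔽 p q r :=
  CliffordAlgebra.ι (Q 𝔽 p q r) (Pi.single a 1)

/-- The even subspace `𝒢^{(0)}`: the `+1`-eigenspace of the grade involution. -/
def Geven : Submodule 𝔽 (G 𝔽 p q r) where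
  carrier := {x | CliffordAlgebra.involute x = x}
  add_mem' := by
    intro a b ha hb
    simp only [Set.mem_setOf_eq, map_add] at ha hb ⊢
    rw [ha, hb]
  zero_mem' := by simp
  smul_mem' := by
    intro c x hx
    simp only [Set.mem_setOf_eq, map_smul] at hx ⊢
    rw [hx]

/-- The odd subspace `𝒢^{(1)}`: the `−1`-eigenspace of the grade involution. -/
def Godd : Submodule 𝔽 (G 𝔽 p q r) where
  carrier := {x | CliffordAlgebra.involute x = -x}
  add_mem' := by
    intro a b ha hb
    simp only [Set.mem_setOf_eq, map_add] at ha hb ⊢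
    rw [ha, hb, neg_add]
  zero_mem' := by simp
  smul_mem' := by
    intro c x hx
    simp only [Set.mem_setOf_eq, map_smul] at hx ⊢
    rw [hx, smul_neg]

/-- The grade-1 subspace `𝒢^1`, the span of the generators. -/
def G1 : Submodule 𝔽 (G 𝔽 p q r) := Submodule.span 𝔽 (Set.range (e 𝔽 p q r))

/-- The scalar (grade-0) subspace `𝒢^0 = 𝔽·1`. -/
def G0 : Submodule 𝔽 (G 𝔽 p q r) := Submodule.span 𝔽 {(1 : G 𝔽 p q r)}

/-- The element `e_{1…n} = e_1 e_2 ⋯ e_n`. -/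
def eTop : G 𝔽 p q r := (List.ofFn (e 𝔽 p q r)).prod

/-- The grade-`n` subspace `𝒢^n = 𝔽·e_{1…n}`. -/
def Gn : Submodule 𝔽 (G 𝔽 p q r) := Submodule.span 𝔽 {eTop 𝔽 p q r}

/-- The Grassmann subalgebra `Λ_r` generated by the null generators. -/
def Λr : Subalgebra 𝔽 (G 𝔽 p q r) :=
  Algebra.adjoin 𝔽 {x | ∃ a : Fin (p + q + r), p + q ≤ (a : ℕ) ∧ x = e 𝔽 p q r a}

/-- `Λ_r` viewed as a subspace of `𝒢`. -/
def Λrs : Submodule 𝔽 (G 𝔽 p q r) := Subalgebra.toSubmodule (Λr 𝔽 p q r)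

/-- The even part `Λ_r^{(0)} = Λ_r ∩ 𝒢^{(0)}`. -/
def Λr0 : Submodule 𝔽 (G 𝔽 p q r) := Λrs 𝔽 p q r ⊓ Geven 𝔽 p q r

/-- The Jacobson radical `rad 𝒢` of `𝒢`: the two-sided ideal generated by the
null generators. -/
def radG : Submodule 𝔽 (G 𝔽 p q r) :=
  Submodule.span 𝔽 {x | ∃ (u v : G 𝔽 p q r) (a : Fin (p + q + r)),
    p + q ≤ (a : ℕ) ∧ x = u * e 𝔽 p q r a * v}

/-- `rad 𝒢^{(0)} = rad 𝒢 ∩ 𝒢^{(0)}`. -/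
def radG0 : Submodule 𝔽 (G 𝔽 p q r) := radG 𝔽 p q r ⊓ Geven 𝔽 p q r

/-- For a subset `S ⊆ 𝒢`, `S^×` denotes those elements of `S` invertible in `𝒢`. -/
def ux (S : Set (G 𝔽 p q r)) : Set (G 𝔽 p q r) := {x ∈ S | IsUnit x}

/-- `𝒢^{(0)×} ∪ 𝒢^{(1)×}` (the group `P^±_{p,q,r}`). -/
def Epm : Set (G 𝔽 p q r) :=
  ux 𝔽 p q r ↑(Geven 𝔽 p q r) ∪ ux 𝔽 p q r ↑(Godd 𝔽 p q r)

/-- `(T⁻¹)^̂ · T`, the grade involution of the inverse times `T`. -/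
def tw (T : G 𝔽 p q r) : G 𝔽 p q r :=
  CliffordAlgebra.involute (Ring.inverse T) * T

/-- The invertible elements `T` with `T W T⁻¹ ⊆ W` (adjoint representation). -/
def gammaAd (W : Submodule 𝔽 (G 𝔽 p q r)) : Set (G 𝔽 p q r) :=
  {T | IsUnit T ∧ ∀ U ∈ W, T * U * Ring.inverse T ∈ W}

/-- The invertible elements `T` with `T̂ W T⁻¹ ⊆ W` (twisted adjoint representation). -/
def gammaTw (W : Submodule 𝔽 (G 𝔽 p q r)) : Set (G 𝔽 p q r) :=
  {T | IsUnit T ∧ ∀ U ∈ W, CliffordAlgebra.involute T * U * Ring.inverse T ∈ W}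


/-! ### Auxiliary development -/

section Aux

open CliffordAlgebra

local instance : Invertible (2 : 𝔽) := invertibleOfNonzero two_ne_zero

lemma w_null {a : Fin (p + q + r)} (ha : p + q ≤ (a : ℕ)) : w 𝔽 p q r a = 0 := by
  have h1 : ¬ ((a : ℕ) < p) := by omega
  have h2 : ¬ ((a : ℕ) < p + q) := by omega
  simp [w, h1, h2]

lemma ortho_null {a : Fin (p + q + r)} (ha : p + q ≤ (a : ℕ)) (v : Fin (p + q + r) → 𝔽) :
    (Q 𝔽 p q r).IsOrtho (Pi.single a 1) v := by
  rw [QuadraticMap.isOrtho_def]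
  simp only [Q, QuadraticMap.weightedSumSquares_apply, smul_eq_mul, Pi.add_apply]
  rw [← Finset.sum_add_distrib]
  refine Finset.sum_congr rfl fun i _ => ?_
  rcases eq_or_ne i a with rfl | h
  · rw [w_null 𝔽 p q r ha]; ring
  · rw [Pi.single_eq_of_ne h]; ring

lemma null_comm {a : Fin (p + q + r)} (ha : p + q ≤ (a : ℕ)) (x : G 𝔽 p q r) :
    e 𝔽 p q r a * x = CliffordAlgebra.involute x * e 𝔽 p q r a := by
  induction x using CliffordAlgebra.induction with
  | algebraMap c => rw [AlgHom.commutes, Algebra.commutes]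
  | ι v =>
      rw [involute_ι, neg_mul]
      have h := ι_mul_ι_add_swap_of_isOrtho (Q := Q 𝔽 p q r) (ortho_null 𝔽 p q r ha v)
      rw [e]
      linear_combination (norm := noncomm_ring) h
  | mul x y hx hy =>
      rw [← mul_assoc, hx, mul_assoc, hy, ← mul_assoc, map_mul]
  | add x y hx hy => rw [mul_add, hx, hy, map_add, add_mul]

lemma Q_single (a : Fin (p + q + r)) : Q 𝔽 p q r (Pi.single a 1) = w 𝔽 p q r a := by
  simp only [Q, QuadraticMap.weightedSumSquares_apply, smul_eq_mul]
  rw [Finset.sum_eq_single a]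
  · simp
  · intro b _ hb; rw [Pi.single_eq_of_ne hb]; ring
  · simp

lemma e_sq_null {a : Fin (p + q + r)} (ha : p + q ≤ (a : ℕ)) :
    e 𝔽 p q r a * e 𝔽 p q r a = 0 := by
  rw [e, ι_sq_scalar, Q_single, w_null 𝔽 p q r ha, map_zero]

lemma sandwich {a : Fin (p + q + r)} (ha : p + q ≤ (a : ℕ)) (x : G 𝔽 p q r) :
    e 𝔽 p q r a * x * e 𝔽 p q r a = 0 := by
  rw [null_comm 𝔽 p q r ha, mul_assoc, e_sq_null 𝔽 p q r ha, mul_zero]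

end Aux
section Aux2

open CliffordAlgebra

lemma list_prod_split {M : Type*} [Monoid M] (l : List M) (i : ℕ) (h : i < l.length) :
    l.prod = (l.take i).prod * l[i] * (l.drop (i + 1)).prod := by
  conv_lhs => rw [← List.take_append_drop i l]
  rw [List.prod_append, List.drop_eq_getElem_cons h, List.prod_cons, mul_assoc]

/-- Head of `eTop` before position `a`. -/
def eH (a : Fin (p + q + r)) : G 𝔽 p q r :=
  ((List.ofFn (e 𝔽 p q r)).take (a : ℕ)).prod

/-- Tail of `eTop` after position `a`. -/
def eT (a : Fin (p + q + r)) : G 𝔽 p q r :=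
  ((List.ofFn (e 𝔽 p q r)).drop ((a : ℕ) + 1)).prod

lemma eTop_split (a : Fin (p + q + r)) :
    eTop 𝔽 p q r = eH 𝔽 p q r a * e 𝔽 p q r a * eT 𝔽 p q r a := by
  have h : (a : ℕ) < (List.ofFn (e 𝔽 p q r)).length := by
    rw [List.length_ofFn]; exact a.isLt
  have := list_prod_split (List.ofFn (e 𝔽 p q r)) (a : ℕ) h
  rw [List.getElem_ofFn] at this
  simp only [Fin.eta] at this
  exact this

lemma eTop_mul_null {a : Fin (p + q + r)} (ha : p + q ≤ (a : ℕ)) (u v : G 𝔽 p q r) :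
    eTop 𝔽 p q r * (u * e 𝔽 p q r a * v) = 0 := by
  rw [eTop_split 𝔽 p q r a]
  have h := sandwich 𝔽 p q r ha (eT 𝔽 p q r a * u)
  calc eH 𝔽 p q r a * e 𝔽 p q r a * eT 𝔽 p q r a * (u * e 𝔽 p q r a * v)
      = eH 𝔽 p q r a * (e 𝔽 p q r a * (eT 𝔽 p q r a * u) * e 𝔽 p q r a) * v := by
        simp only [mul_assoc]
    _ = 0 := by rw [h, mul_zero, zero_mul]

lemma null_mul_eTop {a : Fin (p + q + r)} (ha : p + q ≤ (a : ℕ)) (u v : G 𝔽 p q r) :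
    (u * e 𝔽 p q r a * v) * eTop 𝔽 p q r = 0 := by
  rw [eTop_split 𝔽 p q r a]
  have h := sandwich 𝔽 p q r ha (v * eH 𝔽 p q r a)
  calc (u * e 𝔽 p q r a * v) * (eH 𝔽 p q r a * e 𝔽 p q r a * eT 𝔽 p q r a)
      = u * (e 𝔽 p q r a * (v * eH 𝔽 p q r a) * e 𝔽 p q r a) * eT 𝔽 p q r a := by
        simp only [mul_assoc]
    _ = 0 := by rw [h, mul_zero, zero_mul]

lemma eTop_sq {a : Fin (p + q + r)} (ha : p + q ≤ (a : ℕ)) :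
    eTop 𝔽 p q r * eTop 𝔽 p q r = 0 := by
  nth_rewrite 2 [eTop_split 𝔽 p q r a]
  exact eTop_mul_null 𝔽 p q r ha (eH 𝔽 p q r a) (eT 𝔽 p q r a)

lemma eTop_mem_radG {a : Fin (p + q + r)} (ha : p + q ≤ (a : ℕ)) :
    eTop 𝔽 p q r ∈ radG 𝔽 p q r :=
  Submodule.subset_span ⟨eH 𝔽 p q r a, eT 𝔽 p q r a, a, ha, eTop_split 𝔽 p q r a⟩

lemma radG_mul_left (g : G 𝔽 p q r) {x : G 𝔽 p q r} (hx : x ∈ radG 𝔽 p q r) :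
    g * x ∈ radG 𝔽 p q r := by
  have h : radG 𝔽 p q r ≤ Submodule.comap (LinearMap.mulLeft 𝔽 g) (radG 𝔽 p q r) := by
    rw [radG, Submodule.span_le]
    rintro x ⟨u, v, a, ha, rfl⟩
    exact Submodule.subset_span ⟨g * u, v, a, ha, by simp only [LinearMap.mulLeft_apply, mul_assoc]⟩
  exact h hx

lemma eTop_mul_rad {x : G 𝔽 p q r} (hx : x ∈ radG 𝔽 p q r) :
    eTop 𝔽 p q r * x = 0 := by
  have h : radG 𝔽 p q r ≤ LinearMap.ker (LinearMap.mulLeft 𝔽 (eTop 𝔽 p q r)) := by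
    rw [radG, Submodule.span_le]
    rintro x ⟨u, v, a, ha, rfl⟩
    simpa [LinearMap.mem_ker] using eTop_mul_null 𝔽 p q r ha u v
  simpa using h hx

lemma rad_mul_eTop {x : G 𝔽 p q r} (hx : x ∈ radG 𝔽 p q r) :
    x * eTop 𝔽 p q r = 0 := by
  have h : radG 𝔽 p q r ≤ LinearMap.ker (LinearMap.mulRight 𝔽 (eTop 𝔽 p q r)) := by
    rw [radG, Submodule.span_le]
    rintro x ⟨u, v, a, ha, rfl⟩
    simpa [LinearMap.mem_ker] using null_mul_eTop 𝔽 p q r ha u v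
  simpa using h hx

end Aux2
section Aux3

open CliffordAlgebra

/-- Truncation to the first `p+q` coordinates. -/
def trunc : (Fin (p + q + r) → 𝔽) →ₗ[𝔽] (Fin (p + q) → 𝔽) :=
  LinearMap.funLeft 𝔽 𝔽 (Fin.castAdd r)

/-- The nondegenerate quadratic form on the first `p+q` coordinates. -/
def Qnd : QuadraticForm 𝔽 (Fin (p + q) → 𝔽) :=
  QuadraticMap.weightedSumSquares 𝔽 (fun i => w 𝔽 p q r (Fin.castAdd r i))

lemma Qnd_trunc (v : Fin (p + q + r) → 𝔽) :
    Qnd 𝔽 p q r (trunc 𝔽 p q r v) = Q 𝔽 p q r v := by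
  simp only [Qnd, Q, QuadraticMap.weightedSumSquares_apply, trunc, LinearMap.funLeft_apply]
  rw [Fin.sum_univ_add (f := fun i : Fin (p + q + r) =>
    w 𝔽 p q r i • (v i * v i))]
  have h0 : ∀ j : Fin r, w 𝔽 p q r (Fin.natAdd (p + q) j) • (v (Fin.natAdd (p + q) j) *
      v (Fin.natAdd (p + q) j)) = 0 := by
    intro j
    rw [w_null 𝔽 p q r (by simp [Fin.natAdd])]
    simp
  simp only [h0, Finset.sum_const_zero, add_zero]

/-- The projection onto the nondegenerate Clifford algebra, killing the null generators. -/
def pr : G 𝔽 p q r →ₐ[𝔽] CliffordAlgebra (Qnd 𝔽 p q r) :=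
  CliffordAlgebra.lift (Q 𝔽 p q r)
    ⟨(CliffordAlgebra.ι (Qnd 𝔽 p q r)).comp (trunc 𝔽 p q r), fun v => by
      rw [LinearMap.comp_apply, ι_sq_scalar, Qnd_trunc]⟩

lemma pr_e_null {a : Fin (p + q + r)} (ha : p + q ≤ (a : ℕ)) :
    pr 𝔽 p q r (e 𝔽 p q r a) = 0 := by
  rw [e, pr, CliffordAlgebra.lift_ι_apply, LinearMap.comp_apply]
  have h : trunc 𝔽 p q r (Pi.single a 1) = 0 := by
    funext i
    rw [trunc, LinearMap.funLeft_apply]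
    have hne : Fin.castAdd r i ≠ a := by
      intro hia
      have h2 : (i : ℕ) = (a : ℕ) := by rw [← hia]; rfl
      have := i.isLt
      omega
    simp [Pi.single_eq_of_ne hne]
  rw [h, map_zero]

lemma pr_rad {x : G 𝔽 p q r} (hx : x ∈ radG 𝔽 p q r) : pr 𝔽 p q r x = 0 := by
  have h : radG 𝔽 p q r ≤ LinearMap.ker (pr 𝔽 p q r).toLinearMap := by
    rw [radG, Submodule.span_le]
    rintro x ⟨u, v, a, ha, rfl⟩
    simp [LinearMap.mem_ker, map_mul, pr_e_null 𝔽 p q r ha]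
  simpa using h hx

lemma radG_eq_bot (h : ∀ a : Fin (p + q + r), (a : ℕ) < p + q) :
    radG 𝔽 p q r = ⊥ := by
  rw [radG, Submodule.span_eq_bot]
  rintro x ⟨u, v, a, ha, rfl⟩
  exact absurd ha (not_le.2 (h a))

end Aux3
section Aux4

open CliffordAlgebra

lemma decomp {y : G 𝔽 p q r} (hy : y ∈ Λr 𝔽 p q r) :
    ∃ (c : 𝔽) (m : G 𝔽 p q r), m ∈ Λr 𝔽 p q r ∧ m ∈ radG 𝔽 p q r ∧
      y = algebraMap 𝔽 (G 𝔽 p q r) c + m := by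
  induction hy using Algebra.adjoin_induction with
  | mem x hx =>
      obtain ⟨a, ha, rfl⟩ := hx
      refine ⟨0, e 𝔽 p q r a, Algebra.subset_adjoin ⟨a, ha, rfl⟩,
        Submodule.subset_span ⟨1, 1, a, ha, by rw [one_mul, mul_one]⟩, by simp⟩
  | algebraMap c => exact ⟨c, 0, zero_mem _, zero_mem _, by simp⟩
  | add x y hx hy ihx ihy =>
      obtain ⟨c, m, hm1, hm2, rfl⟩ := ihx
      obtain ⟨c', m', hm1', hm2', rfl⟩ := ihy
      exact ⟨c + c', m + m', add_mem hm1 hm1', add_mem hm2 hm2', by rw [map_add]; abel⟩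
  | mul x y hx hy ihx ihy =>
      obtain ⟨c, m, hm1, hm2, rfl⟩ := ihx
      obtain ⟨c', m', hm1', hm2', rfl⟩ := ihy
      refine ⟨c * c', c • m' + c' • m + m * m', ?_, ?_, ?_⟩
      · exact add_mem (add_mem (Subalgebra.smul_mem _ hm1' c) (Subalgebra.smul_mem _ hm1 c'))
          (mul_mem hm1 hm1')
      · exact add_mem (add_mem (Submodule.smul_mem _ c hm2') (Submodule.smul_mem _ c' hm2))
          (radG_mul_left 𝔽 p q r m hm2')
      · have e1 : (algebraMap 𝔽 (G 𝔽 p q r) c) * m' = c • m' := (Algebra.smul_def c m').symm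
        have e2 : m * (algebraMap 𝔽 (G 𝔽 p q r) c') = c' • m := by
          rw [← Algebra.commutes c' m]; exact (Algebra.smul_def c' m).symm
        rw [add_mul, mul_add, mul_add, e1, e2, ← map_mul]
        abel

lemma mul_scalar_eTop (hsq : eTop 𝔽 p q r * eTop 𝔽 p q r = 0) (s t d f : 𝔽) :
    (algebraMap 𝔽 (G 𝔽 p q r) s + t • eTop 𝔽 p q r) *
      (algebraMap 𝔽 (G 𝔽 p q r) d + f • eTop 𝔽 p q r)
      = algebraMap 𝔽 (G 𝔽 p q r) (s * d) + (s * f + t * d) • eTop 𝔽 p q r := by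
  have h1 : algebraMap 𝔽 (G 𝔽 p q r) s * (f • eTop 𝔽 p q r) = (s * f) • eTop 𝔽 p q r := by
    rw [mul_smul_comm, ← Algebra.smul_def, smul_smul, mul_comm f s]
  have h2 : (t • eTop 𝔽 p q r) * algebraMap 𝔽 (G 𝔽 p q r) d = (t * d) • eTop 𝔽 p q r := by
    rw [smul_mul_assoc, ← Algebra.commutes d, ← Algebra.smul_def, smul_smul]
  have h3 : (t • eTop 𝔽 p q r) * (f • eTop 𝔽 p q r) = 0 := by
    rw [smul_mul_assoc, mul_smul_comm, hsq, smul_zero, smul_zero]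
  rw [mul_add, add_mul, add_mul, h1, h2, h3, ← map_mul, add_zero, add_smul]
  abel

lemma isUnit_scalar_eTop (hsq : eTop 𝔽 p q r * eTop 𝔽 p q r = 0) {c : 𝔽} (hc : c ≠ 0) (μ : 𝔽) :
    IsUnit (algebraMap 𝔽 (G 𝔽 p q r) c + μ • eTop 𝔽 p q r) := by
  refine ⟨⟨algebraMap 𝔽 (G 𝔽 p q r) c + μ • eTop 𝔽 p q r,
    algebraMap 𝔽 (G 𝔽 p q r) c⁻¹ + (-(μ * c⁻¹ * c⁻¹)) • eTop 𝔽 p q r, ?_, ?_⟩, rfl⟩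
  · rw [mul_scalar_eTop 𝔽 p q r hsq]
    have hs : c * (-(μ * c⁻¹ * c⁻¹)) + μ * c⁻¹ = 0 := by field_simp; ring
    rw [mul_inv_cancel₀ hc, hs, zero_smul, add_zero, map_one]
  · rw [mul_scalar_eTop 𝔽 p q r hsq]
    have hs : c⁻¹ * μ + -(μ * c⁻¹ * c⁻¹) * c = 0 := by field_simp; ring
    rw [inv_mul_cancel₀ hc, hs, zero_smul, add_zero, map_one]

lemma isUnit_right {u v : G 𝔽 p q r} (hu : IsUnit u) (huv : IsUnit (u * v)) : IsUnit v := by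
  obtain ⟨U, rfl⟩ := hu
  have h : v = ↑U⁻¹ * (↑U * v) := by rw [← mul_assoc, Units.inv_mul, one_mul]
  rw [h]
  exact (Units.isUnit _).mul huv

lemma ux_mono {S T : Set (G 𝔽 p q r)} (h : S ⊆ T) : ux 𝔽 p q r S ⊆ ux 𝔽 p q r T :=
  fun x hx => ⟨h hx.1, hx.2⟩

lemma ux_Λr_mul {x y : G 𝔽 p q r} (hx : x ∈ ux 𝔽 p q r ↑(Λr 𝔽 p q r))
    (hy : y ∈ ux 𝔽 p q r ↑(Λr 𝔽 p q r)) : x * y ∈ ux 𝔽 p q r ↑(Λr 𝔽 p q r) :=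
  ⟨mul_mem hx.1 hy.1, hx.2.mul hy.2⟩

lemma G0_le_Λr0 : G0 𝔽 p q r ≤ Λr0 𝔽 p q r := by
  rw [G0, Submodule.span_le, Set.singleton_subset_iff]
  refine Submodule.mem_inf.2 ⟨?_, ?_⟩
  · exact (Subalgebra.mem_toSubmodule _).2 (one_mem _)
  · show CliffordAlgebra.involute (1 : G 𝔽 p q r) = 1
    exact map_one _

end Aux4
section Aux5

open CliffordAlgebra

local instance : Invertible (2 : 𝔽) := invertibleOfNonzero two_ne_zero

lemma mem_G0Gn_of (c μ : 𝔽) :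
    algebraMap 𝔽 (G 𝔽 p q r) c + μ • eTop 𝔽 p q r ∈ G0 𝔽 p q r ⊔ Gn 𝔽 p q r := by
  refine Submodule.add_mem _ (Submodule.mem_sup_left ?_) (Submodule.mem_sup_right ?_)
  · rw [G0]; exact Submodule.mem_span_singleton.2 ⟨c, (Algebra.algebraMap_eq_smul_one c).symm⟩
  · rw [Gn]; exact Submodule.smul_mem _ μ (Submodule.mem_span_singleton_self _)

lemma factor {T : G 𝔽 p q r} (hT : T ∈ ux 𝔽 p q r ↑(Λrs 𝔽 p q r ⊔ Gn 𝔽 p q r)) :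
    T ∈ ux 𝔽 p q r ↑(G0 𝔽 p q r ⊔ Gn 𝔽 p q r) * ux 𝔽 p q r ↑(Λr 𝔽 p q r) := by
  obtain ⟨hTmem, hTu⟩ := hT
  rw [SetLike.mem_coe] at hTmem
  obtain ⟨y, hy, z, hz, rfl⟩ := Submodule.mem_sup.1 hTmem
  rw [Gn] at hz
  obtain ⟨μ, rfl⟩ := Submodule.mem_span_singleton.1 hz
  obtain ⟨c, m, hmΛ, hmR, rfl⟩ := decomp 𝔽 p q r ((Subalgebra.mem_toSubmodule _).1 hy)
  by_cases hex : ∃ a : Fin (p + q + r), p + q ≤ (a : ℕ)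
  · obtain ⟨a, ha⟩ := hex
    have hprT : pr 𝔽 p q r (algebraMap 𝔽 (G 𝔽 p q r) c + m + μ • eTop 𝔽 p q r)
        = algebraMap 𝔽 _ c := by
      rw [map_add, map_add, map_smul, pr_rad 𝔽 p q r hmR,
        pr_rad 𝔽 p q r (eTop_mem_radG 𝔽 p q r ha), AlgHom.commutes, smul_zero, add_zero, add_zero]
    have hc : c ≠ 0 := by
      rintro rfl
      have h1 := hTu.map (pr 𝔽 p q r)
      rw [hprT, map_zero] at h1
      exact one_ne_zero ((isUnit_zero_iff.1 h1).symm)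
    have hsq := eTop_sq 𝔽 p q r ha
    have hEm : eTop 𝔽 p q r * m = 0 := eTop_mul_rad 𝔽 p q r hmR
    have huv : (algebraMap 𝔽 (G 𝔽 p q r) c + μ • eTop 𝔽 p q r) * (1 + c⁻¹ • m)
        = algebraMap 𝔽 (G 𝔽 p q r) c + m + μ • eTop 𝔽 p q r := by
      have h2 : (algebraMap 𝔽 (G 𝔽 p q r) c + μ • eTop 𝔽 p q r) * (c⁻¹ • m) = m := by
        rw [mul_smul_comm, add_mul, smul_mul_assoc, hEm, smul_zero, add_zero,
          ← Algebra.smul_def, smul_smul, inv_mul_cancel₀ hc, one_smul]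
      rw [mul_add, mul_one, h2]
      abel
    have hu : IsUnit (algebraMap 𝔽 (G 𝔽 p q r) c + μ • eTop 𝔽 p q r) :=
      isUnit_scalar_eTop 𝔽 p q r hsq hc μ
    have hv : IsUnit (1 + c⁻¹ • m) := isUnit_right 𝔽 p q r hu (by rw [huv]; exact hTu)
    refine Set.mem_mul.2 ⟨_, ⟨?_, hu⟩, _, ⟨?_, hv⟩, huv⟩
    · rw [SetLike.mem_coe]; exact mem_G0Gn_of 𝔽 p q r c μ
    · rw [SetLike.mem_coe]
      exact add_mem (one_mem _) (Subalgebra.smul_mem _ hmΛ _)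
  · have hall : ∀ a : Fin (p + q + r), (a : ℕ) < p + q := by push_neg at hex; exact hex
    have hm0 : m = 0 := by
      have h := hmR
      rw [radG_eq_bot 𝔽 p q r hall] at h
      simpa using h
    refine Set.mem_mul.2 ⟨algebraMap 𝔽 (G 𝔽 p q r) c + m + μ • eTop 𝔽 p q r, ⟨?_, hTu⟩,
      1, ⟨?_, isUnit_one⟩, mul_one _⟩
    · rw [SetLike.mem_coe, hm0, add_zero]
      exact mem_G0Gn_of 𝔽 p q r c μ
    · rw [SetLike.mem_coe]; exact one_mem _

lemma absorb : ux 𝔽 p q r ↑(G0 𝔽 p q r ⊔ Gn 𝔽 p q r) * ux 𝔽 p q r ↑(Λr 𝔽 p q r)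
    ⊆ ux 𝔽 p q r ↑(Λrs 𝔽 p q r ⊔ Gn 𝔽 p q r) := by
  rintro x hx
  rw [Set.mem_mul] at hx
  obtain ⟨u, ⟨hum, huu⟩, y, ⟨hym, hyu⟩, rfl⟩ := hx
  refine ⟨?_, huu.mul hyu⟩
  rw [SetLike.mem_coe] at hum ⊢
  obtain ⟨g0, hg0, z, hz, rfl⟩ := Submodule.mem_sup.1 hum
  rw [Gn] at hz
  obtain ⟨μ, rfl⟩ := Submodule.mem_span_singleton.1 hz
  rw [G0] at hg0
  obtain ⟨c, rfl⟩ := Submodule.mem_span_singleton.1 hg0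
  obtain ⟨c', m', hm'Λ, hm'R, rfl⟩ := decomp 𝔽 p q r (SetLike.mem_coe.1 hym)
  have hEm' : eTop 𝔽 p q r * m' = 0 := eTop_mul_rad 𝔽 p q r hm'R
  have key : (c • (1 : G 𝔽 p q r) + μ • eTop 𝔽 p q r) * (algebraMap 𝔽 (G 𝔽 p q r) c' + m')
      = c • (algebraMap 𝔽 (G 𝔽 p q r) c' + m') + (μ * c') • eTop 𝔽 p q r := by
    have h1 : eTop 𝔽 p q r * (algebraMap 𝔽 (G 𝔽 p q r) c' + m') = c' • eTop 𝔽 p q r := by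
      rw [mul_add, hEm', add_zero, ← Algebra.commutes, ← Algebra.smul_def]
    rw [add_mul, smul_mul_assoc, smul_mul_assoc, one_mul, h1, smul_smul]
  rw [key]
  refine Submodule.add_mem _ (Submodule.mem_sup_left ?_) (Submodule.mem_sup_right ?_)
  · exact Submodule.smul_mem _ _ (add_mem
      ((Subalgebra.mem_toSubmodule _).2 (Subalgebra.algebraMap_mem _ c'))
      ((Subalgebra.mem_toSubmodule _).2 hm'Λ))
  · rw [Gn]; exact Submodule.smul_mem _ _ (Submodule.mem_span_singleton_self _)

end Aux5
/-- `(Λ_r^{(0)} + 𝒢^n)^× Λ_r^× = (𝒢^0 + 𝒢^n)^× Λ_r^× = (Λ_r + 𝒢^n)^×`. -/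
theorem stmt8 (hn : 1 ≤ p + q + r) :
    ux 𝔽 p q r ↑(Λr0 𝔽 p q r ⊔ Gn 𝔽 p q r) * ux 𝔽 p q r ↑(Λr 𝔽 p q r)
      = ux 𝔽 p q r ↑(G0 𝔽 p q r ⊔ Gn 𝔽 p q r) * ux 𝔽 p q r ↑(Λr 𝔽 p q r) ∧
    ux 𝔽 p q r ↑(G0 𝔽 p q r ⊔ Gn 𝔽 p q r) * ux 𝔽 p q r ↑(Λr 𝔽 p q r)
      = ux 𝔽 p q r ↑(Λrs 𝔽 p q r ⊔ Gn 𝔽 p q r) := by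
  have hle : Λr0 𝔽 p q r ⊔ Gn 𝔽 p q r ≤ Λrs 𝔽 p q r ⊔ Gn 𝔽 p q r := by
    rw [Λr0]; exact sup_le_sup_right inf_le_left _
  constructor
  · apply Set.Subset.antisymm
    · rintro x hx
      rw [Set.mem_mul] at hx
      obtain ⟨T, hT, v, hv, rfl⟩ := hx
      have hT' : T ∈ ux 𝔽 p q r ↑(Λrs 𝔽 p q r ⊔ Gn 𝔽 p q r) :=
        ux_mono 𝔽 p q r (SetLike.coe_subset_coe.2 hle) hT
      obtain ⟨u, hu, w', hw', rfl⟩ := Set.mem_mul.1 (factor 𝔽 p q r hT')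
      exact Set.mem_mul.2 ⟨u, hu, w' * v, ux_Λr_mul 𝔽 p q r hw' hv, (mul_assoc u w' v).symm⟩
    · apply Set.mul_subset_mul_right
      apply ux_mono
      exact SetLike.coe_subset_coe.2 (sup_le_sup_right (G0_le_Λr0 𝔽 p q r) _)
  · apply Set.Subset.antisymm
    · exact absorb 𝔽 p q r
    · intro T hT
      exact factor 𝔽 p q r hT


end ClGA
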